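/- arXiv:2307.14202 — 2 statements merged into one kernel-verified Lean document; each statement's English description precedes it below -/
import Mathlib

section
/- The absorption fraction H(t) converges as t → ∞, with lim_{t→∞} H(t) = H_∞ = w/√(D_σ k_d) − (w γ²/ζ) √(D_σ/k_d) + w γ/ζ. (Core limit computation of Corollary 1.) -/
open MeasureTheory Filter Topology

noncomputable def erf (x : ℝ) : ℝ := (2 / Real.sqrt Real.pi) * ∫ u in (0:ℝ)..x, Real.exp (-u ^ 2)

noncomputable def erfc (x : ℝ) : ℝ := 1 - erf x

/-! The error functions tend to their limits by the Gaussian integral `∫₀^∞ exp (-u²) = √π / 2`.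
The only delicate term, `exp (ζ t) * erfc (γ √(Dσ t))`, is at most `exp ((ζ - γ² Dσ) t) = exp (-kd t)`
by the tail bound `erfc x ≤ exp (-x²)`. -/

open Real Set

lemma integrable_exp_neg_sq : Integrable fun u : ℝ => exp (-u ^ 2) := by
  simpa using integrable_exp_neg_mul_sq one_pos

lemma integral_Ioi_exp_neg_sq : ∫ u in Ioi (0 : ℝ), exp (-u ^ 2) = √π / 2 := by
  simpa using integral_gaussian_Ioi 1

lemma tendsto_erf_atTop : Tendsto erf atTop (𝓝 1) := by
  have h := (intervalIntegral_tendsto_integral_Ioi 0 integrable_exp_neg_sq.integrableOn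
    tendsto_id).const_mul (2 / √π)
  have hpi : 2 / √π * (√π / 2) = 1 := by field_simp
  rwa [integral_Ioi_exp_neg_sq, hpi] at h

lemma erfc_eq_integral_Ioi (x : ℝ) : erfc x = 2 / √π * ∫ u in Ioi x, exp (-u ^ 2) := by
  have hpi : 1 = 2 / √π * (√π / 2) := by field_simp
  rw [erfc, erf, ← intervalIntegral.integral_Ioi_sub_Ioi' integrable_exp_neg_sq.integrableOn
    integrable_exp_neg_sq.integrableOn, integral_Ioi_exp_neg_sq, hpi]
  ring

lemma erfc_nonneg (x : ℝ) : 0 ≤ erfc x := by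
  rw [erfc_eq_integral_Ioi]
  exact mul_nonneg (by positivity) (setIntegral_nonneg measurableSet_Ioi fun u _ => (exp_pos _).le)

/-- Substitute `u = s + x` in the tail integral and use `(s + x)² ≥ s² + x²`. -/
lemma erfc_le_exp_neg_sq {x : ℝ} (hx : 0 ≤ x) : erfc x ≤ exp (-x ^ 2) := by
  have hshift : ∫ u in Ioi x, exp (-u ^ 2) = ∫ s in Ioi 0, exp (-(s + x) ^ 2) := by
    rw [← (measurePreserving_add_right volume x).setIntegral_image_emb
      (measurableEmbedding_addRight x) (fun u => exp (-u ^ 2)), image_add_const_Ioi, zero_add]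
  have hle : ∫ s in Ioi 0, exp (-(s + x) ^ 2) ≤ ∫ s in Ioi 0, exp (-x ^ 2) * exp (-s ^ 2) := by
    refine integral_mono_of_nonneg (ae_of_all _ fun s => (exp_pos _).le)
      (integrable_exp_neg_sq.integrableOn.const_mul _) ((ae_restrict_iff' measurableSet_Ioi).2
        (ae_of_all _ fun s (hs : 0 < s) => ?_))
    dsimp only
    rw [← exp_add]
    exact exp_le_exp.2 (by nlinarith)
  rw [integral_const_mul, integral_Ioi_exp_neg_sq] at hle
  rw [erfc_eq_integral_Ioi, hshift]
  calc 2 / √π * ∫ s in Ioi 0, exp (-(s + x) ^ 2)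
      ≤ 2 / √π * (exp (-x ^ 2) * (√π / 2)) := by gcongr
    _ = exp (-x ^ 2) := by field_simp

lemma tendsto_exp_mul_erfc_mul_sqrt {ζ γ D : ℝ} (hγ : 0 ≤ γ) (hζ : ζ < γ ^ 2 * D) :
    Tendsto (fun t => exp (ζ * t) * erfc (γ * √(D * t))) atTop (𝓝 0) := by
  have hbound : ∀ t, exp (ζ * t) * erfc (γ * √(D * t)) ≤ exp ((ζ - γ ^ 2 * D) * t) := fun t =>
    calc exp (ζ * t) * erfc (γ * √(D * t))
        ≤ exp (ζ * t) * exp (-(γ * √(D * t)) ^ 2) := by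
          gcongr
          exact erfc_le_exp_neg_sq (by positivity)
      _ ≤ exp ((ζ - γ ^ 2 * D) * t) := by
          rw [← exp_add, mul_pow]
          gcongr
          have := (sqrt_le_left (sqrt_nonneg (D * t))).1 le_rfl
          nlinarith [mul_le_mul_of_nonneg_left this (sq_nonneg γ)]
  exact tendsto_of_tendsto_of_tendsto_of_le_of_le tendsto_const_nhds
    (tendsto_exp_atBot.comp (tendsto_id.const_mul_atTop_of_neg (sub_neg.2 hζ)))
    (fun t => mul_nonneg (exp_pos _).le (erfc_nonneg _)) hbound

theorem stmt_8_general
    (Dσ kd γ w : ℝ) (hkd : 0 < kd) (hγ : 0 < γ)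
    (ζ : ℝ) (hζdef : ζ = γ ^ 2 * Dσ - kd)
    (H : ℝ → ℝ)
    (hH : ∀ t, 0 < t → H t = w / Real.sqrt (kd * Dσ) * erf (Real.sqrt (kd * t)) -
          w * γ / ζ * (Real.exp (ζ * t) * erfc (γ * Real.sqrt (Dσ * t)) +
            γ * Real.sqrt (Dσ / kd) * erf (Real.sqrt (kd * t)) - 1))
    (Hinf : ℝ)
    (hHinf : Hinf = w / Real.sqrt (Dσ * kd) - w * γ ^ 2 / ζ * Real.sqrt (Dσ / kd) + w * γ / ζ)
    :
    Tendsto H atTop (𝓝 Hinf) := by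
  have herf : Tendsto (fun t => erf √(kd * t)) atTop (𝓝 1) :=
    tendsto_erf_atTop.comp (tendsto_sqrt_atTop.comp (tendsto_id.const_mul_atTop hkd))
  have hdecay : Tendsto (fun t => exp (ζ * t) * erfc (γ * √(Dσ * t))) atTop (𝓝 0) :=
    tendsto_exp_mul_erfc_mul_sqrt hγ.le (by linarith)
  have hlim := (herf.const_mul (w / √(kd * Dσ))).sub
    (((hdecay.add (herf.const_mul (γ * √(Dσ / kd)))).sub_const 1).const_mul (w * γ / ζ))
  have hval : w / √(kd * Dσ) * 1 - w * γ / ζ * (0 + γ * √(Dσ / kd) * 1 - 1) = Hinf := by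
    rw [hHinf, mul_comm kd Dσ]
    ring
  rw [hval] at hlim
  exact hlim.congr' ((eventually_gt_atTop 0).mono fun t ht => (hH t ht).symm)

theorem stmt_8
    (Dσ kd γ w : ℝ) (hDσ : 0 < Dσ) (hkd : 0 < kd) (hγ : 0 < γ)
    (ζ : ℝ) (hζdef : ζ = γ ^ 2 * Dσ - kd) (hζ : ζ ≠ 0)
    (H : ℝ → ℝ)
    (hH : ∀ t, 0 < t → H t = w / Real.sqrt (kd * Dσ) * erf (Real.sqrt (kd * t)) -
          w * γ / ζ * (Real.exp (ζ * t) * erfc (γ * Real.sqrt (Dσ * t)) +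
            γ * Real.sqrt (Dσ / kd) * erf (Real.sqrt (kd * t)) - 1))
    (Hinf : ℝ)
    (hHinf : Hinf = w / Real.sqrt (Dσ * kd) - w * γ ^ 2 / ζ * Real.sqrt (Dσ / kd) + w * γ / ζ)
    :
    Tendsto H atTop (𝓝 Hinf) :=
  stmt_8_general Dσ kd γ w hkd hγ ζ hζdef H hH Hinf hHinf
end

section
/- For every t̂ with 0 < t̂ ≤ τ, the fraction of molecules remaining unreleased after time t̂ is ∫_{t̂}^{τ} f_{c,1}(t) dt + ∫_τ^∞ f_{c,2}(t) dt = C Σ_n c_n (τ − t̂ + (1 − exp(−D_v λ_n² t̂))/(D_v λ_n²)). (Equation (40) of Appendix F, the quantity β₂(t̂) for t̂ ≤ τ.) -/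
/-!
For `t ≥ 0` and `τ ≥ 0` the mode functions `1 - exp (-a t)` and `exp (-a (t - τ)) - exp (-a t)`
are nonnegative, with integral at most `τ - t̂` over `(t̂, τ]` and at most `τ` over `(τ, ∞)`,
uniformly in `a > 0`. Since `∑ |c n| < ∞`, the series of `L¹` norms converges, so both integrals
may be taken term by term, and each term is an elementary exponential integral.
-/

open MeasureTheory Real Set

lemma hasSum_mul_integral_of_integral_norm_le {α ι : Type*} [MeasurableSpace α] [Countable ι]
    {μ : Measure α} {c : ι → ℝ} (hc : Summable fun n => |c n|) {g : ι → α → ℝ}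
    (hg : ∀ n, Integrable (g n) μ) {M : ℝ} (hM : ∀ n, ∫ x, ‖g n x‖ ∂μ ≤ M) :
    HasSum (fun n => c n * ∫ x, g n x ∂μ) (∫ x, ∑' n, c n * g n x ∂μ) := by
  have hnorm : ∀ n, ∫ x, ‖c n * g n x‖ ∂μ = |c n| * ∫ x, ‖g n x‖ ∂μ := fun n => by
    simp_rw [norm_mul, Real.norm_eq_abs (c n), integral_const_mul]
  have hsum : Summable fun n => ∫ x, ‖c n * g n x‖ ∂μ := by
    refine (hc.mul_right M).of_nonneg_of_le (fun n => integral_nonneg fun _ => norm_nonneg _)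
      fun n => ?_
    rw [hnorm]
    exact mul_le_mul_of_nonneg_left (hM n) (abs_nonneg _)
  simpa only [integral_const_mul] using
    hasSum_integral_of_summable_integral_norm (fun n => (hg n).const_mul (c n)) hsum

lemma integral_one_sub_exp_neg_mul {b : ℝ} (hb : b ≠ 0) (u v : ℝ) :
    ∫ t in u..v, (1 - exp (-(b * t))) = v - u - (exp (-(b * u)) - exp (-(b * v))) / b := by
  have hexp : ∫ t in u..v, exp (-(b * t)) = (exp (-(b * u)) - exp (-(b * v))) / b := by
    simp_rw [← neg_mul]
    rw [intervalIntegral.integral_comp_mul_left (fun t => exp t) (neg_ne_zero.2 hb),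
      integral_exp, smul_eq_mul]
    field_simp
    ring
  rw [intervalIntegral.integral_sub intervalIntegrable_const
      ((by fun_prop : Continuous fun t => exp (-(b * t))).intervalIntegrable u v), hexp,
    intervalIntegral.integral_const, smul_eq_mul, mul_one]

lemma integral_exp_neg_mul_Ioi {b : ℝ} (hb : 0 < b) (c : ℝ) :
    ∫ t in Ioi c, exp (-(b * t)) = exp (-(b * c)) / b := by
  simp_rw [← neg_mul]
  rw [integral_exp_mul_Ioi (neg_neg_of_pos hb), neg_div_neg_eq]

lemma integrableOn_exp_neg_mul_Ioi {b : ℝ} (hb : 0 < b) (c : ℝ) :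
    IntegrableOn (fun t => exp (-(b * t))) (Ioi c) := by
  simpa only [neg_mul] using integrableOn_exp_mul_Ioi (neg_neg_of_pos hb) c

lemma exp_neg_mul_sub_eq (b τ t : ℝ) :
    exp (-(b * (t - τ))) = exp (b * τ) * exp (-(b * t)) := by
  rw [← exp_add]
  ring_nf

lemma integrableOn_exp_neg_mul_sub_sub_exp_neg_mul_Ioi {b : ℝ} (hb : 0 < b) (τ : ℝ) :
    IntegrableOn (fun t => exp (-(b * (t - τ))) - exp (-(b * t))) (Ioi τ) := by
  simp_rw [exp_neg_mul_sub_eq b τ]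
  exact ((integrableOn_exp_neg_mul_Ioi hb τ).const_mul _).sub (integrableOn_exp_neg_mul_Ioi hb τ)

lemma integral_exp_neg_mul_sub_sub_exp_neg_mul_Ioi {b : ℝ} (hb : 0 < b) (τ : ℝ) :
    ∫ t in Ioi τ, (exp (-(b * (t - τ))) - exp (-(b * t))) = (1 - exp (-(b * τ))) / b := by
  simp_rw [exp_neg_mul_sub_eq b τ]
  rw [integral_sub ((integrableOn_exp_neg_mul_Ioi hb τ).const_mul _)
      (integrableOn_exp_neg_mul_Ioi hb τ), integral_const_mul, integral_exp_neg_mul_Ioi hb,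
    exp_neg]
  field_simp

lemma integral_norm_one_sub_exp_neg_mul_le {b u v : ℝ} (hb : 0 < b) (hu : 0 ≤ u) (huv : u ≤ v) :
    ∫ t in Ioc u v, ‖1 - exp (-(b * t))‖ ≤ v - u := by
  have hnonneg : ∀ t ∈ Ioc u v, 0 ≤ 1 - exp (-(b * t)) := fun t ht => by
    have : 0 ≤ b * t := mul_nonneg hb.le (hu.trans ht.1.le)
    linarith [exp_le_one_iff.2 (neg_nonpos.2 this)]
  rw [setIntegral_congr_fun measurableSet_Ioc fun t ht => Real.norm_of_nonneg (hnonneg t ht),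
    ← intervalIntegral.integral_of_le huv, integral_one_sub_exp_neg_mul hb.ne']
  have : exp (-(b * v)) ≤ exp (-(b * u)) := exp_le_exp.2 (by nlinarith)
  have : 0 ≤ (exp (-(b * u)) - exp (-(b * v))) / b := div_nonneg (by linarith) hb.le
  linarith

lemma integral_norm_exp_neg_mul_sub_sub_exp_neg_mul_Ioi_le {b τ : ℝ} (hb : 0 < b) (hτ : 0 ≤ τ) :
    ∫ t in Ioi τ, ‖exp (-(b * (t - τ))) - exp (-(b * t))‖ ≤ τ := by
  have hnonneg : ∀ t, 0 ≤ exp (-(b * (t - τ))) - exp (-(b * t)) := fun t =>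
    sub_nonneg.2 (exp_le_exp.2 (by nlinarith))
  rw [setIntegral_congr_fun measurableSet_Ioi fun t _ => Real.norm_of_nonneg (hnonneg t),
    integral_exp_neg_mul_sub_sub_exp_neg_mul_Ioi hb, div_le_iff₀ hb]
  linarith [add_one_le_exp (-(b * τ))]

theorem stmt_15_general
    (Dv : ℝ)
    (hDv : 0 < Dv)
    (τ : ℝ)
    (C : ℝ)
    (lam : ℕ → ℝ) (hlam : ∀ n, 0 < lam n)
    (c : ℕ → ℝ)
    (hsum : Summable fun n => |c n|)
    (fc1 : ℝ → ℝ)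
    (hfc1 : ∀ t, fc1 t = C * ∑' n, c n * (1 - Real.exp (-(Dv * lam n ^ 2 * t))))
    (fc2 : ℝ → ℝ)
    (hfc2 : ∀ t, fc2 t = C * ∑' n, c n *
          (Real.exp (-(Dv * lam n ^ 2 * (t - τ))) - Real.exp (-(Dv * lam n ^ 2 * t))))
    (tHat : ℝ) (h1 : 0 < tHat) (h2 : tHat ≤ τ) :
    (∫ t in tHat..τ, fc1 t) + (∫ t in Set.Ioi τ, fc2 t) =
      C * ∑' n, c n * (τ - tHat + (1 - Real.exp (-(Dv * lam n ^ 2 * tHat))) / (Dv * lam n ^ 2)) := by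
  have ha : ∀ n, 0 < Dv * lam n ^ 2 := fun n => by have := hlam n; positivity
  have hI1 := hasSum_mul_integral_of_integral_norm_le hsum
    (fun n => (by fun_prop : Continuous fun t => 1 - exp (-(Dv * lam n ^ 2 * t))).integrableOn_Ioc)
    (fun n => integral_norm_one_sub_exp_neg_mul_le (ha n) h1.le h2)
  have hI2 := hasSum_mul_integral_of_integral_norm_le hsum
    (fun n => integrableOn_exp_neg_mul_sub_sub_exp_neg_mul_Ioi (ha n) τ)
    (fun n => integral_norm_exp_neg_mul_sub_sub_exp_neg_mul_Ioi_le (ha n) (h1.le.trans h2))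
  simp_rw [hfc1, hfc2, intervalIntegral.integral_const_mul, integral_const_mul,
    intervalIntegral.integral_of_le h2, ← mul_add, ← (hI1.add hI2).tsum_eq]
  congr 1
  refine tsum_congr fun n => ?_
  rw [← intervalIntegral.integral_of_le h2, integral_one_sub_exp_neg_mul (ha n).ne',
    integral_exp_neg_mul_sub_sub_exp_neg_mul_Ioi (ha n)]
  field_simp
  ring

theorem stmt_15
    (rT kf μ Nv Dv : ℝ)
    (hrT : 0 < rT) (hkf : 0 < kf) (hμ : 0 < μ) (hNv : 0 < Nv) (hDv : 0 < Dv)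
    (τ : ℝ) (hτ : τ = Nv / μ)
    (C : ℝ) (hCdef : C = 4 * rT ^ 2 * kf * μ / (Nv * Dv))
    (lam : ℕ → ℝ) (hlam : ∀ n, 0 < lam n)
    (hne : ∀ n, 2 * lam n * rT ≠ Real.sin (2 * lam n * rT))
    (c : ℕ → ℝ)
    (hc : ∀ n, c n = lam n * (Real.sin (lam n * rT) / (lam n * rT)) /
          (2 * lam n * rT - Real.sin (2 * lam n * rT)))
    (hsum : Summable fun n => |c n|)
    (fc1 : ℝ → ℝ)
    (hfc1 : ∀ t, fc1 t = C * ∑' n, c n * (1 - Real.exp (-(Dv * lam n ^ 2 * t))))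
    (fc2 : ℝ → ℝ)
    (hfc2 : ∀ t, fc2 t = C * ∑' n, c n *
          (Real.exp (-(Dv * lam n ^ 2 * (t - τ))) - Real.exp (-(Dv * lam n ^ 2 * t))))
    (tHat : ℝ) (h1 : 0 < tHat) (h2 : tHat ≤ τ) :
    (∫ t in tHat..τ, fc1 t) + (∫ t in Set.Ioi τ, fc2 t) =
      C * ∑' n, c n * (τ - tHat + (1 - Real.exp (-(Dv * lam n ^ 2 * tHat))) / (Dv * lam n ^ 2)) :=
  stmt_15_general Dv hDv τ C lam hlam c hsum fc1 hfc1 fc2 hfc2 tHat h1 h2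
end
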